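/- Let X be a scheme and let 𝒞 be an affine open cover of X. The map sending the isomorphism class of a closed immersion φ : Y → X to the family (ker φ♯_U)_{U ∈ 𝒞} of ideals of the rings O_X(U) is injective on isomorphism classes of closed immersions into X. -/

import Mathlib

open AlgebraicGeometry CategoryTheory

lemma AlgebraicGeometry.Scheme.Hom.ker_eq_of_ker_app_eq {Y Z X : Scheme} (φ : Y ⟶ X) (ψ : Z ⟶ X)
    [QuasiCompact φ] [QuasiCompact ψ] {ι : Type*} (U : ι → X.Opens)
    (hUaff : ∀ i, IsAffineOpen (U i)) (hUcov : ⨆ i, U i = ⊤)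
    (h : ∀ i, RingHom.ker (φ.app (U i)).hom = RingHom.ker (ψ.app (U i)).hom) :
    φ.ker = ψ.ker :=
  Scheme.IdealSheafData.ext_of_iSup_eq_top (fun i ↦ ⟨U i, hUaff i⟩) hUcov fun i ↦ by
    simpa only [Scheme.Hom.ker_apply] using h i

theorem ker_app_family_injective {Y Z X : Scheme} (φ : Y ⟶ X) (ψ : Z ⟶ X)
    [IsClosedImmersion φ] [IsClosedImmersion ψ]
    {ι : Type*} (U : ι → X.Opens) (hUaff : ∀ i, IsAffineOpen (U i))
    (hUcov : ⨆ i, U i = ⊤)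
    (h : ∀ i, RingHom.ker (φ.app (U i)).hom = RingHom.ker (ψ.app (U i)).hom) :
    ∃ θ : Y ≅ Z, θ.hom ≫ ψ = φ := by
  have hker : ψ.ker = φ.ker := (φ.ker_eq_of_ker_app_eq ψ U hUaff hUcov h).symm
  have := IsClosedImmersion.isIso_lift ψ φ hker
  exact ⟨asIso (IsClosedImmersion.lift ψ φ hker.le), IsClosedImmersion.lift_fac ψ φ hker.le⟩
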